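/- For any joint distribution of (θ, x_P, x_V, x_F) with θ conditionally independent of x_F given (x_P, x_V), and any β, γ ≥ 0, prior q(θ), likelihoods q(x_P|θ) and q(x_V|x_P,θ): I(θ; x_P, x_V | x_F) − β I(θ; x_P) − γ I(θ; x_V|x_P) ≤ E[log(p(θ|x_P,x_V)/q(θ)) − β log q(x_P|θ) − γ log q(x_V|x_P,θ)] − β H(x_P) − γ H(x_V) + γ I(x_P; x_V). -/
import Mathlib


open Real

variable {Θ P V F : Type*} [Fintype Θ] [Fintype P] [Fintype V] [Fintype F]

/-- marginal p(θ) -/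
noncomputable def mT (p : Θ × P × V × F → ℝ) (θ : Θ) : ℝ :=
  ∑ xp, ∑ xv, ∑ xf, p (θ, xp, xv, xf)

/-- marginal p(x_P) -/
noncomputable def mP (p : Θ × P × V × F → ℝ) (xp : P) : ℝ :=
  ∑ θ, ∑ xv, ∑ xf, p (θ, xp, xv, xf)

/-- marginal p(x_V) -/
noncomputable def mV (p : Θ × P × V × F → ℝ) (xv : V) : ℝ :=
  ∑ θ, ∑ xp, ∑ xf, p (θ, xp, xv, xf)

/-- marginal p(x_F) -/
noncomputable def mF (p : Θ × P × V × F → ℝ) (xf : F) : ℝ :=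
  ∑ θ, ∑ xp, ∑ xv, p (θ, xp, xv, xf)

/-- marginal p(θ, x_P) -/
noncomputable def mTP (p : Θ × P × V × F → ℝ) (θ : Θ) (xp : P) : ℝ :=
  ∑ xv, ∑ xf, p (θ, xp, xv, xf)

/-- marginal p(θ, x_F) -/
noncomputable def mTF (p : Θ × P × V × F → ℝ) (θ : Θ) (xf : F) : ℝ :=
  ∑ xp, ∑ xv, p (θ, xp, xv, xf)

/-- marginal p(x_P, x_V) -/
noncomputable def mPV (p : Θ × P × V × F → ℝ) (xp : P) (xv : V) : ℝ :=
  ∑ θ, ∑ xf, p (θ, xp, xv, xf)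

/-- marginal p(θ, x_P, x_V) -/
noncomputable def mTPV (p : Θ × P × V × F → ℝ) (θ : Θ) (xp : P) (xv : V) : ℝ :=
  ∑ xf, p (θ, xp, xv, xf)

/-- marginal p(x_P, x_V, x_F) -/
noncomputable def mPVF (p : Θ × P × V × F → ℝ) (xp : P) (xv : V) (xf : F) : ℝ :=
  ∑ θ, p (θ, xp, xv, xf)

-- marginal p(θ, x_P, x_V, x_F) is p itself

/-- mutual information I(θ; x_P) -/
noncomputable def I_T_P (p : Θ × P × V × F → ℝ) : ℝ :=
  ∑ θ, ∑ xp, mTP p θ xp * log (mTP p θ xp / (mT p θ * mP p xp))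

/-- mutual information I(x_P; x_V) -/
noncomputable def I_P_V (p : Θ × P × V × F → ℝ) : ℝ :=
  ∑ xp, ∑ xv, mPV p xp xv * log (mPV p xp xv / (mP p xp * mV p xv))

/-- conditional mutual information I(θ; x_V | x_P) -/
noncomputable def I_T_V_given_P (p : Θ × P × V × F → ℝ) : ℝ :=
  ∑ θ, ∑ xp, ∑ xv, mTPV p θ xp xv *
    log ((mTPV p θ xp xv / mP p xp) /
      ((mTP p θ xp / mP p xp) * (mPV p xp xv / mP p xp)))

/-- conditional mutual information I(θ; x_P, x_V | x_F) -/
noncomputable def I_T_PV_given_F (p : Θ × P × V × F → ℝ) : ℝ :=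
  ∑ θ, ∑ xp, ∑ xv, ∑ xf, p (θ, xp, xv, xf) *
    log ((p (θ, xp, xv, xf) / mF p xf) /
      ((mTF p θ xf / mF p xf) * (mPVF p xp xv xf / mF p xf)))

/-- entropy H(x_P) -/
noncomputable def H_P (p : Θ × P × V × F → ℝ) : ℝ := -∑ xp, mP p xp * log (mP p xp)

/-- entropy H(x_V) -/
noncomputable def H_V (p : Θ × P × V × F → ℝ) : ℝ := -∑ xv, mV p xv * log (mV p xv)

private lemma gibbs_pt (a b : ℝ) (ha : 0 ≤ a) (hb : 0 ≤ b) (h : b = 0 → a = 0) :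
    a - b ≤ a * Real.log (a / b) := by
  rcases eq_or_lt_of_le ha with h0 | h0
  · simp [← h0]; linarith
  · have hb0 : 0 < b := hb.lt_of_ne (fun e => by simp [h e.symm] at h0)
    have hlog : Real.log (b / a) ≤ b / a - 1 := Real.log_le_sub_one_of_pos (by positivity)
    have hrw : Real.log (a / b) = - Real.log (b / a) := by
      rw [← Real.log_inv]; congr 1; field_simp
    rw [hrw]
    have h2 := mul_le_mul_of_nonneg_left hlog (le_of_lt h0)
    have hx : a * (b / a - 1) = b - a := by field_simp
    nlinarith

private lemma sum_rot3 {A B C : Type*} [Fintype A] [Fintype B] [Fintype C]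
    (f : A → B → C → ℝ) :
    ∑ c, ∑ a, ∑ b, f a b c = ∑ a, ∑ b, ∑ c, f a b c := by
  rw [Finset.sum_comm]
  exact Finset.sum_congr rfl fun a _ => Finset.sum_comm

/-- Variational bound on the predictive information bottleneck objective with a
    validation set:
    I(θ; x_P, x_V | x_F) − β I(θ; x_P) − γ I(θ; x_V|x_P)
      ≤ E[log(p(θ|x_P,x_V)/q(θ)) − β log q(x_P|θ) − γ log q(x_V|x_P,θ)]
        − β H(x_P) − γ H(x_V) + γ I(x_P; x_V). -/
theorem pib_variational_bound_validation (p : Θ × P × V × F → ℝ)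
    (hp0 : ∀ w, 0 ≤ p w) (hp1 : ∑ w, p w = 1)
    (hCI : ∀ θ xp xv xf,
      p (θ, xp, xv, xf) * mPV p xp xv = mTPV p θ xp xv * mPVF p xp xv xf)
    (β γ : ℝ) (hβ : 0 ≤ β) (hγ : 0 ≤ γ)
    (q : Θ → ℝ) (hq0 : ∀ θ, 0 < q θ) (hq1 : ∑ θ, q θ = 1)
    (qP : Θ → P → ℝ) (hqP0 : ∀ θ xp, 0 < qP θ xp) (hqP1 : ∀ θ, ∑ xp, qP θ xp = 1)
    (qV : P → Θ → V → ℝ) (hqV0 : ∀ xp θ xv, 0 < qV xp θ xv)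
    (hqV1 : ∀ xp θ, ∑ xv, qV xp θ xv = 1) :
    I_T_PV_given_F p - β * I_T_P p - γ * I_T_V_given_P p ≤
      (∑ θ, ∑ xp, ∑ xv, ∑ xf, p (θ, xp, xv, xf) *
          (log ((mTPV p θ xp xv / mPV p xp xv) / q θ) -
            β * log (qP θ xp) - γ * log (qV xp θ xv))) -
        β * H_P p - γ * H_V p + γ * I_P_V p := by
  
  classical
  -- nonnegativity of marginals
  have hTPV0 : ∀ θ xp xv, 0 ≤ mTPV p θ xp xv :=
    fun θ xp xv => Finset.sum_nonneg fun _ _ => hp0 _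
  have hTP0 : ∀ θ xp, 0 ≤ mTP p θ xp :=
    fun θ xp => Finset.sum_nonneg fun _ _ => Finset.sum_nonneg fun _ _ => hp0 _
  have hTF0 : ∀ θ xf, 0 ≤ mTF p θ xf :=
    fun θ xf => Finset.sum_nonneg fun _ _ => Finset.sum_nonneg fun _ _ => hp0 _
  have hF0 : ∀ xf, 0 ≤ mF p xf :=
    fun xf => Finset.sum_nonneg fun _ _ =>
      Finset.sum_nonneg fun _ _ => Finset.sum_nonneg fun _ _ => hp0 _
  have hT0 : ∀ θ, 0 ≤ mT p θ :=
    fun θ => Finset.sum_nonneg fun _ _ =>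
      Finset.sum_nonneg fun _ _ => Finset.sum_nonneg fun _ _ => hp0 _
  -- defeq decompositions of marginals
  have hTdec : ∀ θ, mT p θ = ∑ xp, mTP p θ xp := fun _ => rfl
  have hPdec : ∀ xp, mP p xp = ∑ θ, mTP p θ xp := fun _ => rfl
  have hFdec : ∀ xf, mF p xf = ∑ θ, mTF p θ xf := fun _ => rfl
  have hTPdec : ∀ θ xp, mTP p θ xp = ∑ xv, mTPV p θ xp xv := fun _ _ => rfl
  have hPVdec : ∀ xp xv, mPV p xp xv = ∑ θ, mTPV p θ xp xv := fun _ _ => rfl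
  have hVdec : ∀ xv, mV p xv = ∑ θ, ∑ xp, mTPV p θ xp xv := fun _ => rfl
  -- pointwise identity for piece A
  have hptA : ∀ θ xp xv xf,
      p (θ, xp, xv, xf) * log ((mTPV p θ xp xv / mPV p xp xv) / q θ) -
        p (θ, xp, xv, xf) * log ((p (θ, xp, xv, xf) / mF p xf) /
          ((mTF p θ xf / mF p xf) * (mPVF p xp xv xf / mF p xf))) =
      p (θ, xp, xv, xf) * log (mTF p θ xf / (mF p xf * q θ)) := by
    intro θ xp xv xf
    rcases eq_or_lt_of_le (hp0 (θ, xp, xv, xf)) with h0 | h0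
    · rw [← h0]; ring
    · have hTPVpos : 0 < mTPV p θ xp xv :=
        lt_of_lt_of_le h0 (Finset.single_le_sum (f := fun xf' => p (θ, xp, xv, xf'))
          (fun i _ => hp0 _) (Finset.mem_univ xf))
      have hPVpos : 0 < mPV p xp xv := by
        refine lt_of_lt_of_le hTPVpos ?_
        rw [hPVdec]
        exact Finset.single_le_sum (fun i _ => hTPV0 i xp xv) (Finset.mem_univ θ)
      have hPVFpos : 0 < mPVF p xp xv xf :=
        lt_of_lt_of_le h0 (Finset.single_le_sum (f := fun θ' => p (θ', xp, xv, xf))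
          (fun i _ => hp0 _) (Finset.mem_univ θ))
      have hTFpos : 0 < mTF p θ xf := by
        refine lt_of_lt_of_le h0 (le_trans (Finset.single_le_sum
          (f := fun xv' => p (θ, xp, xv', xf)) (fun i _ => hp0 _) (Finset.mem_univ xv)) ?_)
        exact Finset.single_le_sum (f := fun xp' => ∑ xv', p (θ, xp', xv', xf))
          (fun i _ => Finset.sum_nonneg fun _ _ => hp0 _) (Finset.mem_univ xp)
      have hFpos : 0 < mF p xf := by
        refine lt_of_lt_of_le hTFpos ?_
        rw [hFdec]
        exact Finset.single_le_sum (fun i _ => hTF0 i xf) (Finset.mem_univ θ)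
      have hci : log (mTPV p θ xp xv) + log (mPVF p xp xv xf) =
          log (p (θ, xp, xv, xf)) + log (mPV p xp xv) := by
        rw [← Real.log_mul (ne_of_gt hTPVpos) (ne_of_gt hPVFpos),
          ← Real.log_mul (ne_of_gt h0) (ne_of_gt hPVpos), hCI θ xp xv xf]
      have e2 : (p (θ, xp, xv, xf) / mF p xf) /
          ((mTF p θ xf / mF p xf) * (mPVF p xp xv xf / mF p xf)) =
          p (θ, xp, xv, xf) * mF p xf / (mTF p θ xf * mPVF p xp xv xf) := by
        field_simp
      rw [e2, div_div,
        Real.log_div (ne_of_gt hTPVpos) (ne_of_gt (mul_pos hPVpos (hq0 θ))),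
        Real.log_div (ne_of_gt (mul_pos h0 hFpos)) (ne_of_gt (mul_pos hTFpos hPVFpos)),
        Real.log_div (ne_of_gt hTFpos) (ne_of_gt (mul_pos hFpos (hq0 θ))),
        Real.log_mul (ne_of_gt hPVpos) (ne_of_gt (hq0 θ)),
        Real.log_mul (ne_of_gt h0) (ne_of_gt hFpos),
        Real.log_mul (ne_of_gt hTFpos) (ne_of_gt hPVFpos),
        Real.log_mul (ne_of_gt hFpos) (ne_of_gt (hq0 θ))]
      linear_combination (p (θ, xp, xv, xf)) * hci
  -- pointwise identity for piece B
  have hptB : ∀ θ xp,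
      mTP p θ xp * log (mTP p θ xp / (mT p θ * mP p xp)) -
        mTP p θ xp * log (qP θ xp) + mTP p θ xp * log (mP p xp) =
      mTP p θ xp * log (mTP p θ xp / (mT p θ * qP θ xp)) := by
    intro θ xp
    rcases eq_or_lt_of_le (hTP0 θ xp) with h0 | h0
    · rw [← h0]; ring
    · have hTpos : 0 < mT p θ := by
        refine lt_of_lt_of_le h0 ?_
        rw [hTdec]
        exact Finset.single_le_sum (fun i _ => hTP0 θ i) (Finset.mem_univ xp)
      have hPpos : 0 < mP p xp := by
        refine lt_of_lt_of_le h0 ?_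
        rw [hPdec]
        exact Finset.single_le_sum (fun i _ => hTP0 i xp) (Finset.mem_univ θ)
      rw [Real.log_div (ne_of_gt h0) (ne_of_gt (mul_pos hTpos hPpos)),
        Real.log_div (ne_of_gt h0) (ne_of_gt (mul_pos hTpos (hqP0 θ xp))),
        Real.log_mul (ne_of_gt hTpos) (ne_of_gt hPpos),
        Real.log_mul (ne_of_gt hTpos) (ne_of_gt (hqP0 θ xp))]
      ring
  -- pointwise identity for piece C
  have hptC : ∀ θ xp xv,
      mTPV p θ xp xv * log ((mTPV p θ xp xv / mP p xp) /
          ((mTP p θ xp / mP p xp) * (mPV p xp xv / mP p xp))) -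
        mTPV p θ xp xv * log (qV xp θ xv) + mTPV p θ xp xv * log (mV p xv) +
        mTPV p θ xp xv * log (mPV p xp xv / (mP p xp * mV p xv)) =
      mTPV p θ xp xv * log (mTPV p θ xp xv / (mTP p θ xp * qV xp θ xv)) := by
    intro θ xp xv
    rcases eq_or_lt_of_le (hTPV0 θ xp xv) with h0 | h0
    · rw [← h0]; ring
    · have hTPpos : 0 < mTP p θ xp := by
        refine lt_of_lt_of_le h0 ?_
        rw [hTPdec]
        exact Finset.single_le_sum (fun i _ => hTPV0 θ xp i) (Finset.mem_univ xv)
      have hPVpos : 0 < mPV p xp xv := by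
        refine lt_of_lt_of_le h0 ?_
        rw [hPVdec]
        exact Finset.single_le_sum (fun i _ => hTPV0 i xp xv) (Finset.mem_univ θ)
      have hPpos : 0 < mP p xp := by
        refine lt_of_lt_of_le hTPpos ?_
        rw [hPdec]
        exact Finset.single_le_sum (fun i _ => hTP0 i xp) (Finset.mem_univ θ)
      have hVpos : 0 < mV p xv := by
        refine lt_of_lt_of_le h0 ?_
        rw [hVdec]
        refine le_trans (Finset.single_le_sum (fun i _ => hTPV0 θ i xv)
          (Finset.mem_univ xp)) ?_
        exact Finset.single_le_sum (f := fun θ' => ∑ xp', mTPV p θ' xp' xv)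
          (fun i _ => Finset.sum_nonneg fun j _ => hTPV0 i j xv) (Finset.mem_univ θ)
      have e1 : (mTPV p θ xp xv / mP p xp) /
          ((mTP p θ xp / mP p xp) * (mPV p xp xv / mP p xp)) =
          mTPV p θ xp xv * mP p xp / (mTP p θ xp * mPV p xp xv) := by
        field_simp
      rw [e1,
        Real.log_div (ne_of_gt (mul_pos h0 hPpos)) (ne_of_gt (mul_pos hTPpos hPVpos)),
        Real.log_div (ne_of_gt hPVpos) (ne_of_gt (mul_pos hPpos hVpos)),
        Real.log_div (ne_of_gt h0) (ne_of_gt (mul_pos hTPpos (hqV0 xp θ xv))),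
        Real.log_mul (ne_of_gt h0) (ne_of_gt hPpos),
        Real.log_mul (ne_of_gt hTPpos) (ne_of_gt hPVpos),
        Real.log_mul (ne_of_gt hPpos) (ne_of_gt hVpos),
        Real.log_mul (ne_of_gt hTPpos) (ne_of_gt (hqV0 xp θ xv))]
      ring
  -- rewrite the expectation terms as sums against marginals
  have hE2 : ∑ θ, ∑ xp, mTP p θ xp * log (qP θ xp) =
      ∑ θ, ∑ xp, ∑ xv, ∑ xf, p (θ, xp, xv, xf) * log (qP θ xp) := by
    simp only [mTP, Finset.sum_mul]
  have hE3 : ∑ θ, ∑ xp, ∑ xv, mTPV p θ xp xv * log (qV xp θ xv) =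
      ∑ θ, ∑ xp, ∑ xv, ∑ xf, p (θ, xp, xv, xf) * log (qV xp θ xv) := by
    simp only [mTPV, Finset.sum_mul]
  have hE1 : ∑ θ, ∑ xp, ∑ xv, mTPV p θ xp xv *
        log ((mTPV p θ xp xv / mPV p xp xv) / q θ) =
      ∑ θ, ∑ xp, ∑ xv, ∑ xf, p (θ, xp, xv, xf) *
        log ((mTPV p θ xp xv / mPV p xp xv) / q θ) := by
    simp only [mTPV, Finset.sum_mul]
  -- split the big sum on the right-hand side
  have hsplit : ∑ θ, ∑ xp, ∑ xv, ∑ xf, p (θ, xp, xv, xf) *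
        (log ((mTPV p θ xp xv / mPV p xp xv) / q θ) -
          β * log (qP θ xp) - γ * log (qV xp θ xv)) =
      (∑ θ, ∑ xp, ∑ xv, ∑ xf, p (θ, xp, xv, xf) *
          log ((mTPV p θ xp xv / mPV p xp xv) / q θ)) -
        β * (∑ θ, ∑ xp, ∑ xv, ∑ xf, p (θ, xp, xv, xf) * log (qP θ xp)) -
        γ * (∑ θ, ∑ xp, ∑ xv, ∑ xf, p (θ, xp, xv, xf) * log (qV xp θ xv)) := by
    simp only [← Finset.sum_sub_distrib, Finset.mul_sum]
    refine Finset.sum_congr rfl fun θ _ => Finset.sum_congr rfl fun xp _ =>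
      Finset.sum_congr rfl fun xv _ => Finset.sum_congr rfl fun xf _ => by ring
  -- piece A identity
  have hA : (∑ θ, ∑ xp, ∑ xv, ∑ xf, p (θ, xp, xv, xf) *
        log ((mTPV p θ xp xv / mPV p xp xv) / q θ)) - I_T_PV_given_F p =
      ∑ θ, ∑ xf, mTF p θ xf * log (mTF p θ xf / (mF p xf * q θ)) := by
    unfold I_T_PV_given_F
    simp only [← Finset.sum_sub_distrib]
    refine Finset.sum_congr rfl fun θ _ => ?_
    calc ∑ xp, ∑ xv, ∑ xf, (p (θ, xp, xv, xf) *
            log ((mTPV p θ xp xv / mPV p xp xv) / q θ) -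
          p (θ, xp, xv, xf) * log ((p (θ, xp, xv, xf) / mF p xf) /
            ((mTF p θ xf / mF p xf) * (mPVF p xp xv xf / mF p xf))))
        = ∑ xp, ∑ xv, ∑ xf, p (θ, xp, xv, xf) *
            log (mTF p θ xf / (mF p xf * q θ)) := by
          refine Finset.sum_congr rfl fun xp _ => Finset.sum_congr rfl fun xv _ =>
            Finset.sum_congr rfl fun xf _ => hptA θ xp xv xf
      _ = ∑ xf, ∑ xp, ∑ xv, p (θ, xp, xv, xf) *
            log (mTF p θ xf / (mF p xf * q θ)) := (sum_rot3 _).symm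
      _ = ∑ xf, mTF p θ xf * log (mTF p θ xf / (mF p xf * q θ)) := by
          simp only [mTF, Finset.sum_mul]
  -- piece B identity
  have hB : I_T_P p - (∑ θ, ∑ xp, mTP p θ xp * log (qP θ xp)) - H_P p =
      ∑ θ, ∑ xp, mTP p θ xp * log (mTP p θ xp / (mT p θ * qP θ xp)) := by
    unfold I_T_P H_P
    have hH : ∑ xp, mP p xp * log (mP p xp) =
        ∑ θ, ∑ xp, mTP p θ xp * log (mP p xp) := by
      rw [Finset.sum_comm]
      exact Finset.sum_congr rfl fun xp _ => by rw [hPdec xp, Finset.sum_mul]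
    rw [sub_neg_eq_add, hH]
    simp only [← Finset.sum_sub_distrib, ← Finset.sum_add_distrib]
    exact Finset.sum_congr rfl fun θ _ => Finset.sum_congr rfl fun xp _ => hptB θ xp
  -- piece C identity
  have hC : I_T_V_given_P p - (∑ θ, ∑ xp, ∑ xv, mTPV p θ xp xv * log (qV xp θ xv)) -
        H_V p + I_P_V p =
      ∑ θ, ∑ xp, ∑ xv, mTPV p θ xp xv *
        log (mTPV p θ xp xv / (mTP p θ xp * qV xp θ xv)) := by
    unfold I_T_V_given_P H_V I_P_V
    have hH : ∑ xv, mV p xv * log (mV p xv) =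
        ∑ θ, ∑ xp, ∑ xv, mTPV p θ xp xv * log (mV p xv) := by
      rw [← sum_rot3 (fun θ xp xv => mTPV p θ xp xv * log (mV p xv))]
      exact Finset.sum_congr rfl fun xv _ => by
        rw [hVdec xv, Finset.sum_mul]
        exact Finset.sum_congr rfl fun θ _ => by rw [Finset.sum_mul]
    have hI : ∑ xp, ∑ xv, mPV p xp xv * log (mPV p xp xv / (mP p xp * mV p xv)) =
        ∑ θ, ∑ xp, ∑ xv, mTPV p θ xp xv *
          log (mPV p xp xv / (mP p xp * mV p xv)) := by
      rw [sum_rot3 (fun xp xv θ => mTPV p θ xp xv *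
        log (mPV p xp xv / (mP p xp * mV p xv)))]
      exact Finset.sum_congr rfl fun xp _ => Finset.sum_congr rfl fun xv _ => by
        rw [hPVdec xp xv, Finset.sum_mul]
    rw [sub_neg_eq_add, hH, hI]
    simp only [← Finset.sum_sub_distrib, ← Finset.sum_add_distrib]
    refine Finset.sum_congr rfl fun θ _ => Finset.sum_congr rfl fun xp _ =>
      Finset.sum_congr rfl fun xv _ => hptC θ xp xv
  -- nonnegativity of piece A
  have hA0 : 0 ≤ ∑ θ, ∑ xf, mTF p θ xf * log (mTF p θ xf / (mF p xf * q θ)) := by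
    have h1 : ∑ θ, ∑ xf, (mTF p θ xf - mF p xf * q θ) ≤
        ∑ θ, ∑ xf, mTF p θ xf * log (mTF p θ xf / (mF p xf * q θ)) := by
      refine Finset.sum_le_sum fun θ _ => Finset.sum_le_sum fun xf _ => ?_
      refine gibbs_pt _ _ (hTF0 θ xf) (mul_nonneg (hF0 xf) (hq0 θ).le) fun hz => ?_
      have hFz : mF p xf = 0 := by
        rcases mul_eq_zero.1 hz with h | h
        · exact h
        · exact absurd h (ne_of_gt (hq0 θ))
      have hle : mTF p θ xf ≤ mF p xf := by
        rw [hFdec]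
        exact Finset.single_le_sum (fun i _ => hTF0 i xf) (Finset.mem_univ θ)
      exact le_antisymm (hFz ▸ hle) (hTF0 θ xf)
    have h2 : ∑ θ, ∑ xf, (mTF p θ xf - mF p xf * q θ) = 0 := by
      simp only [Finset.sum_sub_distrib]
      have e1 : ∑ θ, ∑ xf, mTF p θ xf = ∑ xf, mF p xf := by
        rw [Finset.sum_comm]
        exact Finset.sum_congr rfl fun xf _ => (hFdec xf).symm
      have e2 : ∑ θ, ∑ xf, mF p xf * q θ = ∑ xf, mF p xf := by
        rw [Finset.sum_comm]
        refine Finset.sum_congr rfl fun xf _ => ?_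
        rw [← Finset.mul_sum, hq1, mul_one]
      rw [e1, e2, sub_self]
    linarith
  -- nonnegativity of piece B
  have hB0 : 0 ≤ ∑ θ, ∑ xp, mTP p θ xp * log (mTP p θ xp / (mT p θ * qP θ xp)) := by
    have h1 : ∑ θ, ∑ xp, (mTP p θ xp - mT p θ * qP θ xp) ≤
        ∑ θ, ∑ xp, mTP p θ xp * log (mTP p θ xp / (mT p θ * qP θ xp)) := by
      refine Finset.sum_le_sum fun θ _ => Finset.sum_le_sum fun xp _ => ?_
      refine gibbs_pt _ _ (hTP0 θ xp) (mul_nonneg (hT0 θ) (hqP0 θ xp).le) fun hz => ?_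
      have hTz : mT p θ = 0 := by
        rcases mul_eq_zero.1 hz with h | h
        · exact h
        · exact absurd h (ne_of_gt (hqP0 θ xp))
      have hle : mTP p θ xp ≤ mT p θ := by
        rw [hTdec]
        exact Finset.single_le_sum (fun i _ => hTP0 θ i) (Finset.mem_univ xp)
      exact le_antisymm (hTz ▸ hle) (hTP0 θ xp)
    have h2 : ∑ θ, ∑ xp, (mTP p θ xp - mT p θ * qP θ xp) = 0 := by
      refine Finset.sum_eq_zero fun θ _ => ?_
      simp only [Finset.sum_sub_distrib]
      rw [← hTdec, ← Finset.mul_sum, hqP1, mul_one, sub_self]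
    linarith
  -- nonnegativity of piece C
  have hC0 : 0 ≤ ∑ θ, ∑ xp, ∑ xv, mTPV p θ xp xv *
      log (mTPV p θ xp xv / (mTP p θ xp * qV xp θ xv)) := by
    have h1 : ∑ θ, ∑ xp, ∑ xv, (mTPV p θ xp xv - mTP p θ xp * qV xp θ xv) ≤
        ∑ θ, ∑ xp, ∑ xv, mTPV p θ xp xv *
          log (mTPV p θ xp xv / (mTP p θ xp * qV xp θ xv)) := by
      refine Finset.sum_le_sum fun θ _ => Finset.sum_le_sum fun xp _ =>
        Finset.sum_le_sum fun xv _ => ?_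
      refine gibbs_pt _ _ (hTPV0 θ xp xv)
        (mul_nonneg (hTP0 θ xp) (hqV0 xp θ xv).le) fun hz => ?_
      have hTPz : mTP p θ xp = 0 := by
        rcases mul_eq_zero.1 hz with h | h
        · exact h
        · exact absurd h (ne_of_gt (hqV0 xp θ xv))
      have hle : mTPV p θ xp xv ≤ mTP p θ xp := by
        rw [hTPdec]
        exact Finset.single_le_sum (fun i _ => hTPV0 θ xp i) (Finset.mem_univ xv)
      exact le_antisymm (hTPz ▸ hle) (hTPV0 θ xp xv)
    have h2 : ∑ θ, ∑ xp, ∑ xv, (mTPV p θ xp xv - mTP p θ xp * qV xp θ xv) = 0 := by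
      refine Finset.sum_eq_zero fun θ _ => Finset.sum_eq_zero fun xp _ => ?_
      simp only [Finset.sum_sub_distrib]
      rw [← hTPdec, ← Finset.mul_sum, hqV1, mul_one, sub_self]
    linarith
  -- assemble
  rw [hsplit, ← hE2, ← hE3]
  have hBβ : β * I_T_P p - β * (∑ θ, ∑ xp, mTP p θ xp * log (qP θ xp)) -
      β * H_P p = β * (∑ θ, ∑ xp, mTP p θ xp *
        log (mTP p θ xp / (mT p θ * qP θ xp))) := by
    linear_combination β * hB
  have hCγ : γ * I_T_V_given_P p -
      γ * (∑ θ, ∑ xp, ∑ xv, mTPV p θ xp xv * log (qV xp θ xv)) -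
      γ * H_V p + γ * I_P_V p = γ * (∑ θ, ∑ xp, ∑ xv, mTPV p θ xp xv *
        log (mTPV p θ xp xv / (mTP p θ xp * qV xp θ xv))) := by
    linear_combination γ * hC
  have hb := mul_nonneg hβ hB0
  have hc := mul_nonneg hγ hC0
  linarith [hA, hA0, hBβ, hCγ, hb, hc]
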